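/- arXiv:0910.0056 — 6 statements merged into one kernel-verified Lean document; each statement's English description precedes it below -/
import Mathlib

section
/- Let f : X ⟶ Y be a morphism of schemes with étale envelope triple (E, e, i, j). Then e : E ⟶ Y is universally closed if and only if f is universally closed. -/
/-!
The points of `E` are covered by `i(X)` and `j(Y)`, and `e` is a retraction of `j`. Hence for
`Z ⊆ E` closed, `e(Z) = f(i⁻¹ Z) ∪ j⁻¹ Z`, which is closed as soon as `f` is a closed map. Both the
section and the covering survive base change, so `e` is universally closed when `f` is;
conversely `f = i ≫ e` with `i` a closed immersion.
-/

open AlgebraicGeometry CategoryTheory CategoryTheory.Limits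

universe u

/-- A morphism of schemes is formally unramified if for every (affine) test scheme `Spec R`
and closed subscheme defined by a nilpotent ideal, `Y`-morphisms to `X` are determined by
their restriction to the closed subscheme. -/
def Scheme.Hom.FormallyUnramified {X Y : Scheme.{u}} (f : X ⟶ Y) : Prop :=
  ∀ (R : CommRingCat.{u}) (I : Ideal R), IsNilpotent I →
    ∀ g₁ g₂ : Spec R ⟶ X, g₁ ≫ f = g₂ ≫ f →
      Spec.map (CommRingCat.ofHom (Ideal.Quotient.mk I)) ≫ g₁ =
        Spec.map (CommRingCat.ofHom (Ideal.Quotient.mk I)) ≫ g₂ →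
      g₁ = g₂

/-- A morphism of schemes is unramified if it is locally of finite type and
formally unramified. -/
def Scheme.Hom.Unramified {X Y : Scheme.{u}} (f : X ⟶ Y) : Prop :=
  LocallyOfFiniteType f ∧ Scheme.Hom.FormallyUnramified f

/-- A morphism of schemes is flat if all the induced maps on stalks are flat. -/
def Scheme.Hom.Flat' {X Y : Scheme.{u}} (f : X ⟶ Y) : Prop :=
  ∀ x : X, letI := RingHom.toAlgebra (f.stalkMap x).hom
    Module.Flat (Y.presheaf.stalk (f.base x)) (X.presheaf.stalk x)

/-- A morphism of schemes is étale if it is flat, unramified and locally of finite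
presentation. -/
def Scheme.Hom.Etale {X Y : Scheme.{u}} (f : X ⟶ Y) : Prop :=
  Scheme.Hom.Flat' f ∧ Scheme.Hom.Unramified f ∧ LocallyOfFinitePresentation f

/-- An étale envelope triple for `f : X ⟶ Y`. -/
structure IsEtaleEnvelope {X Y : Scheme.{u}} (f : X ⟶ Y) (E : Scheme.{u})
    (e : E ⟶ Y) (i : X ⟶ E) (j : Y ⟶ E) : Prop where
  etale : Scheme.Hom.Etale e
  closedImmersion : IsClosedImmersion i
  openImmersion : IsOpenImmersion j
  i_comp : i ≫ e = f
  j_comp : j ≫ e = 𝟙 Y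
  range_i : Set.range i.base = (Set.range j.base)ᶜ

theorem IsClosedMap.of_comp_of_leftInverse {X Y E : Type*} [TopologicalSpace X]
    [TopologicalSpace Y] [TopologicalSpace E] {i : X → E} {e : E → Y} {j : Y → E}
    (hi : Continuous i) (hj : Continuous j) (hie : IsClosedMap (e ∘ i))
    (hje : Function.LeftInverse e j) (hcover : (Set.range j)ᶜ ⊆ Set.range i) :
    IsClosedMap e := by
  intro Z hZ
  have himage : e '' Z = (e ∘ i) '' (i ⁻¹' Z) ∪ j ⁻¹' Z := by
    ext y
    constructor
    · rintro ⟨z, hz, rfl⟩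
      by_cases hzj : z ∈ Set.range j
      · obtain ⟨y, rfl⟩ := hzj
        exact Or.inr (by simpa [hje y] using hz)
      · obtain ⟨x, rfl⟩ := hcover hzj
        exact Or.inl ⟨x, hz, rfl⟩
    · rintro (⟨x, hx, rfl⟩ | hy)
      · exact ⟨i x, hx, rfl⟩
      · exact ⟨j y, hy, hje y⟩
  rw [himage]
  exact (hie _ (hZ.preimage hi)).union (hZ.preimage hj)

namespace CategoryTheory.IsPullback

variable {C : Type*} [Category C] {E' Y' E Y : C} {e' : E' ⟶ Y'} {i₁ : E' ⟶ E} {i₂ : Y' ⟶ Y}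
  {e : E ⟶ Y}

lemma exists_section_isPullback (sq : IsPullback e' i₁ i₂ e) {j : Y ⟶ E} (hj : j ≫ e = 𝟙 Y) :
    ∃ j' : Y' ⟶ E', j' ≫ e' = 𝟙 Y' ∧ IsPullback j' i₂ i₁ j := by
  refine ⟨sq.lift (𝟙 Y') (i₂ ≫ j) (by simp [hj]), sq.lift_fst _ _ _, ?_⟩
  refine IsPullback.of_right ?_ (sq.lift_snd _ _ _) sq
  rw [sq.lift_fst, hj]
  exact IsPullback.of_horiz_isIso ⟨by simp⟩

end CategoryTheory.IsPullback

namespace AlgebraicGeometry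

lemma Scheme.range_fst_of_isPullback {P X Y Z : Scheme.{u}} {fst : P ⟶ X} {snd : P ⟶ Y}
    {f : X ⟶ Z} {g : Y ⟶ Z} (h : IsPullback fst snd f g) :
    Set.range fst = f ⁻¹' Set.range g := by
  rw [← h.isoPullback_hom_fst, Scheme.Hom.comp_base, TopCat.coe_comp, Set.range_comp,
    h.isoPullback.hom.surjective.range_eq, Set.image_univ, Scheme.Pullback.range_fst]

theorem UniversallyClosed.of_comp_of_section {X Y E : Scheme.{u}} {i : X ⟶ E} {e : E ⟶ Y}
    {j : Y ⟶ E} [UniversallyClosed (i ≫ e)] (hj : j ≫ e = 𝟙 Y)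
    (hcover : (Set.range j)ᶜ ⊆ Set.range i) : UniversallyClosed e := by
  constructor
  intro E' Y' i₁ i₂ e' sq
  have hi' : IsPullback (pullback.snd i i₁ ≫ e') (pullback.fst i i₁) i₂ (i ≫ e) :=
    (IsPullback.of_hasPullback i i₁).flip.paste_horiz sq
  obtain ⟨j', hj'e', hj'⟩ := sq.exists_section_isPullback hj
  refine IsClosedMap.of_comp_of_leftInverse (pullback.snd i i₁).continuous j'.continuous
    (UniversallyClosed.universally_isClosedMap _ _ _ hi') (fun y => ?_) ?_
  · rw [← Scheme.Hom.comp_apply, hj'e']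
    rfl
  · rw [Scheme.range_fst_of_isPullback hj', Scheme.Pullback.range_snd, ← Set.preimage_compl]
    exact Set.preimage_mono hcover

end AlgebraicGeometry

/-- The étale envelope map is universally closed iff `f` is universally closed. -/
theorem etaleEnvelope_universallyClosed_iff {X Y E : Scheme.{u}} (f : X ⟶ Y)
    (e : E ⟶ Y) (i : X ⟶ E) (j : Y ⟶ E) (h : IsEtaleEnvelope f E e i j) :
    UniversallyClosed e ↔ UniversallyClosed f := by
  have := h.closedImmersion
  rw [← h.i_comp]
  exact ⟨fun _ => inferInstance,
    fun _ => UniversallyClosed.of_comp_of_section h.j_comp h.range_i.symm.subset⟩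
end

section
/- Let f : X ⟶ Y be a morphism of schemes with étale envelope triple (E, e, i, j). Then e : E ⟶ Y is quasi-compact if and only if f is quasi-compact. -/
open AlgebraicGeometry CategoryTheory CategoryTheory.Limits

universe u

/-!
Since `E` is the union of the images of `i` and `j`, the preimage under `e` of a compact open
`U ⊆ Y` is the union of the images of `f⁻¹ U` under `i` and of `U` under `j`; conversely `f = i ≫ e`
with `i` a closed immersion.
-/

open Set

theorem isCompact_preimage_of_range_union_eq_univ {X Y E Z : Type*} [TopologicalSpace X]
    [TopologicalSpace Y] [TopologicalSpace E] {e : E → Z} {i : X → E} {j : Y → E}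
    (hi : Continuous i) (hj : Continuous j) (hcover : range i ∪ range j = univ) {U : Set Z}
    (hiU : IsCompact ((e ∘ i) ⁻¹' U)) (hjU : IsCompact ((e ∘ j) ⁻¹' U)) :
    IsCompact (e ⁻¹' U) := by
  have hsplit : e ⁻¹' U = i '' ((e ∘ i) ⁻¹' U) ∪ j '' ((e ∘ j) ⁻¹' U) := by
    rw [preimage_comp, preimage_comp, image_preimage_eq_inter_range,
      image_preimage_eq_inter_range, ← inter_union_distrib_left, hcover, inter_univ]
  rw [hsplit]
  exact (hiU.image hi).union (hjU.image hj)

theorem quasiCompact_of_comp_of_range_union_eq_univ {X Y E Z : Scheme.{u}} (e : E ⟶ Z)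
    (i : X ⟶ E) (j : Y ⟶ E) (hcover : range i ∪ range j = univ)
    [QuasiCompact (i ≫ e)] [QuasiCompact (j ≫ e)] : QuasiCompact e := by
  refine (quasiCompact_iff e).2 fun U hU hUc => ?_
  exact isCompact_preimage_of_range_union_eq_univ i.continuous j.continuous hcover
    (QuasiCompact.isCompact_preimage (f := i ≫ e) U hU hUc)
    (QuasiCompact.isCompact_preimage (f := j ≫ e) U hU hUc)

/-- The étale envelope map is quasi-compact iff `f` is quasi-compact. -/
theorem etaleEnvelope_quasiCompact_iff {X Y E : Scheme.{u}} (f : X ⟶ Y)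
    (e : E ⟶ Y) (i : X ⟶ E) (j : Y ⟶ E) (h : IsEtaleEnvelope f E e i j) :
    QuasiCompact e ↔ QuasiCompact f := by
  have := h.closedImmersion
  constructor
  · intro
    rw [← h.i_comp]
    infer_instance
  · intro
    have : QuasiCompact (i ≫ e) := by rw [h.i_comp]; infer_instance
    have : QuasiCompact (j ≫ e) := by rw [h.j_comp]; infer_instance
    have hcover : range i ∪ range j = univ := by
      rw [h.range_i, compl_union_self]
    exact quasiCompact_of_comp_of_range_union_eq_univ e i j hcover
end

section
/- Let f : X ⟶ Y be an immersion of schemes (an isomorphism onto a locally closed subscheme of Y). Then there exists an étale envelope triple (E, e, i, j) for f with E a scheme. (Concretely, E is obtained by gluing Y and the open subscheme U = Y ∖ (closure(f(X)) ∖ f(X)) along the open subset U ∖ f(X) = Y ∖ closure(f(X)).) -/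
open AlgebraicGeometry CategoryTheory CategoryTheory.Limits

universe u

/-!
Factor `f` as a closed immersion `c : X ⟶ U` followed by the open immersion `ι : U ⟶ Y` of
`U = Y ∖ (closure f(X) ∖ f(X))`, and let `E` be `Y` and `U` glued along `U ∖ c(X)`, i.e. the
pushout of two open immersions. The map `E ⟶ Y` restricts to `𝟙 Y` and to `ι` on the two
pieces, so it is a local isomorphism, hence étale. The only points of the `U`-piece not identified
with points of the `Y`-piece are those of `c(X)`, so `X` is the closed complement of `Y` in `E`.
-/

namespace AlgebraicGeometry

lemma Etale.of_isLocalIso {X Y : Scheme.{u}} (f : X ⟶ Y) [IsLocalIso f] : Etale f :=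
  -- instance search finds neither of these two instances for `@Etale`
  have : IsZariskiLocalAtSource @Etale :=
    HasRingHomProperty.instIsZariskiLocalAtSource (Q := RingHom.Etale)
  have : MorphismProperty.ContainsIdentities @Etale :=
    MorphismProperty.IsMultiplicative.toContainsIdentities
  IsLocalIso.le_of_isZariskiLocalAtSource @Etale _ _ f ‹_›

lemma Scheme.ker_appTop_SpecMap {R S : CommRingCat.{u}} (φ : R ⟶ S) :
    RingHom.ker (Spec.map φ).appTop.hom =
      (RingHom.ker φ.hom).comap (Scheme.ΓSpecIso R).hom.hom := by
  ext x
  simp only [RingHom.mem_ker, Ideal.mem_comap]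
  rw [← (Scheme.ΓSpecIso S).commRingCatIsoToRingEquiv.map_eq_zero_iff]
  exact iff_of_eq congr(($(Scheme.ΓSpecIso_naturality φ)).hom x = 0)

lemma Scheme.isNilpotent_ker_SpecMap_quotientMk {R : CommRingCat.{u}} {I : Ideal R}
    (hI : IsNilpotent I) :
    IsNilpotent (Spec.map (CommRingCat.ofHom (Ideal.Quotient.mk I))).ker := by
  rw [Scheme.ker_of_isAffine, ker_appTop_SpecMap, CommRingCat.hom_ofHom, Ideal.mk_ker,
    ← Scheme.IdealSheafData.equivOfIsAffine_symm_apply]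
  refine IsNilpotent.map ?_ Scheme.IdealSheafData.equivOfIsAffine.symm
  obtain ⟨n, hn⟩ := hI
  refine ⟨n, eq_bot_iff.mpr ((Ideal.le_comap_pow _ n).trans ?_)⟩
  rw [hn, Ideal.zero_eq_bot]
  exact (Ideal.comap_bot_of_injective _ (ConcreteCategory.bijective_of_isIso _).1).le

end AlgebraicGeometry

lemma Scheme.Hom.FormallyUnramified.of_formallyUnramified {X Y : Scheme.{u}} (f : X ⟶ Y)
    [AlgebraicGeometry.FormallyUnramified f] : Scheme.Hom.FormallyUnramified f :=
  fun _ _ hI _ _ hf hg ↦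
    FormallyUnramified.hom_ext _ (Scheme.isNilpotent_ker_SpecMap_quotientMk hI) f hg hf

lemma Scheme.Hom.Etale.of_etale {X Y : Scheme.{u}} (f : X ⟶ Y) [AlgebraicGeometry.Etale f] :
    Scheme.Hom.Etale f :=
  ⟨Flat.stalkMap f, ⟨inferInstance, .of_formallyUnramified f⟩, inferInstance⟩

namespace AlgebraicGeometry

section Pushout

variable {W A B : Scheme.{u}} (g : W ⟶ A) (h : W ⟶ B) [IsOpenImmersion g] [IsOpenImmersion h]

instance : IsOpenImmersion (pushout.inl g h) :=
  inferInstanceAs (IsOpenImmersion (colimit.ι (span g h) _))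

instance : IsOpenImmersion (pushout.inr g h) :=
  inferInstanceAs (IsOpenImmersion (colimit.ι (span g h) _))

lemma Scheme.pushout_mem_range_inl_or_inr (z : (pushout g h : Scheme.{u})) :
    z ∈ Set.range (pushout.inl g h).base ∨ z ∈ Set.range (pushout.inr g h).base := by
  obtain ⟨i, x, rfl⟩ := Scheme.IsLocallyDirected.ι_jointly_surjective (span g h) z
  rcases i with _ | _ | _
  · refine .inl ⟨g.base x, ?_⟩
    rw [← colimit.w (span g h) WalkingSpan.Hom.fst, Scheme.Hom.comp_apply]
    rfl
  · exact .inl ⟨x, rfl⟩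
  · exact .inr ⟨x, rfl⟩

lemma Scheme.pushout_inr_mem_range_inl_iff (b : B) :
    (pushout.inr g h).base b ∈ Set.range (pushout.inl g h).base ↔ b ∈ Set.range h.base := by
  constructor
  · rintro ⟨a, hab⟩
    obtain ⟨k, fi, fj, x, -, rfl⟩ := (Scheme.IsLocallyDirected.ι_eq_ι_iff (span g h)).mp hab
    rcases k with _ | _ | _
    · obtain rfl : fj = WalkingSpan.Hom.snd := Subsingleton.elim _ _
      exact ⟨x, rfl⟩
    · nomatch fj
    · nomatch fi
  · rintro ⟨w, rfl⟩
    exact ⟨g.base w, by simpa using congr(($(pushout.condition (f := g) (g := h))).base w)⟩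

lemma Scheme.compl_range_pushout_inl :
    (Set.range (pushout.inl g h).base)ᶜ = (pushout.inr g h).base '' (Set.range h.base)ᶜ := by
  ext z
  constructor
  · intro hz
    obtain ⟨a, rfl⟩ | ⟨b, rfl⟩ := Scheme.pushout_mem_range_inl_or_inr g h z
    · exact absurd ⟨a, rfl⟩ hz
    · exact ⟨b, mt (Scheme.pushout_inr_mem_range_inl_iff g h b).mpr hz, rfl⟩
  · rintro ⟨b, hb, rfl⟩
    exact mt (Scheme.pushout_inr_mem_range_inl_iff g h b).mp hb

instance isLocalIso_pushout_desc {S : Scheme.{u}} (a : A ⟶ S) (b : B ⟶ S) [IsOpenImmersion a]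
    [IsOpenImmersion b] (w : g ≫ a = h ≫ b) : IsLocalIso (pushout.desc a b w) := by
  refine ⟨fun z ↦ ?_⟩
  obtain ⟨x, rfl⟩ | ⟨y, rfl⟩ := Scheme.pushout_mem_range_inl_or_inr g h z
  · refine ⟨(pushout.inl g h).opensRange, ⟨x, rfl⟩, ?_⟩
    rw [← Scheme.Hom.isoOpensRange_inv_comp, Category.assoc, pushout.inl_desc]
    infer_instance
  · refine ⟨(pushout.inr g h).opensRange, ⟨y, rfl⟩, ?_⟩
    rw [← Scheme.Hom.isoOpensRange_inv_comp, Category.assoc, pushout.inr_desc]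
    infer_instance

end Pushout

section Construction

variable {X U Y : Scheme.{u}} (c : X ⟶ U) [IsClosedImmersion c] (ι : U ⟶ Y)
  [IsOpenImmersion ι]

def Scheme.Hom.rangeCompl : U.Opens :=
  ⟨(Set.range c.base)ᶜ, c.isClosedEmbedding.isClosed_range.isOpen_compl⟩

theorem isEtaleEnvelope_pushout :
    IsEtaleEnvelope (c ≫ ι) (pushout (c.rangeCompl.ι ≫ ι) c.rangeCompl.ι)
      (pushout.desc (𝟙 Y) ι (Category.comp_id _)) (c ≫ pushout.inr _ _)
      (pushout.inl _ _) := by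
  have range_eq : Set.range (c ≫ pushout.inr (c.rangeCompl.ι ≫ ι) c.rangeCompl.ι).base =
      (Set.range (pushout.inl (c.rangeCompl.ι ≫ ι) c.rangeCompl.ι).base)ᶜ := by
    rw [Scheme.compl_range_pushout_inl, Scheme.Opens.range_ι, Scheme.Hom.comp_base,
      TopCat.coe_comp, Set.range_comp]
    simp only [Scheme.Hom.rangeCompl, TopologicalSpace.Opens.coe_mk, compl_compl]
  have : Etale (pushout.desc (𝟙 Y) ι (Category.comp_id (c.rangeCompl.ι ≫ ι))) :=
    .of_isLocalIso _
  refine ⟨.of_etale _, .of_isPreimmersion _ ?_, inferInstance,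
    by rw [Category.assoc, pushout.inr_desc], pushout.inl_desc _ _ _, range_eq⟩
  rw [range_eq]
  exact (Scheme.Hom.isOpenEmbedding _).isOpen_range.isClosed_compl

end Construction

end AlgebraicGeometry

/-- An immersion of schemes admits an étale envelope. -/
theorem etaleEnvelope_exists_of_isImmersion {X Y : Scheme.{u}} (f : X ⟶ Y)
    [IsImmersion f] :
    ∃ (E : Scheme.{u}) (e : E ⟶ Y) (i : X ⟶ E) (j : Y ⟶ E),
      IsEtaleEnvelope f E e i j :=
  f.liftCoborder_ι ▸ ⟨_, _, _, _, isEtaleEnvelope_pushout f.liftCoborder f.coborderRange.ι⟩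
end

section
/- Let R be a commutative ring and A a commutative R-algebra. Regard A as an algebra over A ⊗[R] A via the multiplication map A ⊗[R] A ⟶ A, a ⊗ b ↦ ab. Then A is formally unramified over R if and only if A is formally étale over A ⊗[R] A. -/
open TensorProduct

universe u

/-- `A` is formally unramified over `R` iff `A` is formally étale over `A ⊗[R] A`, where
`A` is an `A ⊗[R] A`-algebra via the multiplication map `a ⊗ b ↦ a * b`. -/
theorem formallyUnramified_iff_formallyEtale_over_tensorProduct
    (R A : Type u) [CommRing R] [CommRing A] [Algebra R A] :
    letI : Algebra (A ⊗[R] A) A :=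
      (Algebra.TensorProduct.lmul' R (S := A)).toRingHom.toAlgebra
    Algebra.FormallyUnramified R A ↔ Algebra.FormallyEtale (A ⊗[R] A) A := by
  let _ : Algebra (A ⊗[R] A) A := (Algebra.TensorProduct.lmul' R (S := A)).toRingHom.toAlgebra
  have mul_surjective : Function.Surjective (algebraMap (A ⊗[R] A) A) := fun a ↦
    ⟨a ⊗ₜ 1, by simp [RingHom.algebraMap_toAlgebra]⟩
  rw [Algebra.FormallyEtale.iff_of_surjective mul_surjective, Algebra.formallyUnramified_iff]
  -- `Ω[A⁄R]` is by definition the cotangent module `I/I²` of the kernel `I` of multiplication.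
  exact (KaehlerDifferential.ideal R A).cotangent_subsingleton_iff
end

section
/- Let f : X ⟶ Y be a morphism of schemes with étale envelope triple (E, e, i, j). If f is of finite presentation (quasi-compact, quasi-separated and locally of finite presentation), then e : E ⟶ Y is of finite presentation. -/
open AlgebraicGeometry CategoryTheory CategoryTheory.Limits

universe u

/-!
The scheme `E` is the union of the closed image of `X` and the open image of `Y`, on which `e`
restricts to `f` and to `𝟙 Y`. Hence compact opens of `E` over an affine open of `Y` are
controlled by the two pieces, and `e` inherits quasi-compactness and quasi-separatedness from
`f` and `𝟙 Y`, provided `j` is quasi-compact. For that, note that `i` is of finite presentation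
(since `i ≫ e = f` is, and `e` is of finite type), so over an affine open `V` of `E` it is cut out
by a finitely generated ideal and `V \ range i` is a finite union of basic opens.
-/

theorem RingHom.FinitePresentation.ker_fg_of_surjective {R S : Type*} [CommRing R] [CommRing S]
    {φ : R →+* S} (hφ : φ.FinitePresentation) (hsurj : Function.Surjective φ) :
    (RingHom.ker φ).FG := by
  algebraize [φ]
  exact Algebra.FinitePresentation.ker_fG_of_surjective (Algebra.ofId R S) hsurj

theorem isCompact_of_range_union_eq_univ {A B E : Type*} [TopologicalSpace A]
    [TopologicalSpace B] [TopologicalSpace E] {p : A → E} {q : B → E} (hp : Continuous p)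
    (hq : Continuous q) (hcover : Set.range p ∪ Set.range q = Set.univ) {s : Set E}
    (hps : IsCompact (p ⁻¹' s)) (hqs : IsCompact (q ⁻¹' s)) : IsCompact s := by
  have hs : s = p '' (p ⁻¹' s) ∪ q '' (q ⁻¹' s) := by
    rw [Set.image_preimage_eq_inter_range, Set.image_preimage_eq_inter_range,
      ← Set.inter_union_distrib_left, hcover, Set.inter_univ]
  rw [hs]
  exact (hps.image hp).union (hqs.image hq)

theorem IsSpectralMap.isCompact_preimage_inter {A E : Type*} [TopologicalSpace A]
    [TopologicalSpace E] {p : A → E} (hp : IsSpectralMap p) {s W₁ W₂ : Set E}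
    (hps : IsQuasiSeparated (p ⁻¹' s)) (hW₁s : W₁ ⊆ s) (hW₁ : IsOpen W₁) (hW₁c : IsCompact W₁)
    (hW₂s : W₂ ⊆ s) (hW₂ : IsOpen W₂) (hW₂c : IsCompact W₂) : IsCompact (p ⁻¹' (W₁ ∩ W₂)) :=
  hps _ _ (Set.preimage_mono hW₁s) (hW₁.preimage hp.continuous)
    (hp.isCompact_preimage_of_isOpen hW₁ hW₁c) (Set.preimage_mono hW₂s)
    (hW₂.preimage hp.continuous) (hp.isCompact_preimage_of_isOpen hW₂ hW₂c)

theorem isQuasiSeparated_of_range_union_eq_univ {A B E : Type*} [TopologicalSpace A]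
    [TopologicalSpace B] [TopologicalSpace E] {p : A → E} {q : B → E} (hp : IsSpectralMap p)
    (hq : IsSpectralMap q) (hcover : Set.range p ∪ Set.range q = Set.univ) {s : Set E}
    (hps : IsQuasiSeparated (p ⁻¹' s)) (hqs : IsQuasiSeparated (q ⁻¹' s)) :
    IsQuasiSeparated s := fun _ _ hW₁s hW₁ hW₁c hW₂s hW₂ hW₂c ↦
  isCompact_of_range_union_eq_univ hp.continuous hq.continuous hcover
    (hp.isCompact_preimage_inter hps hW₁s hW₁ hW₁c hW₂s hW₂ hW₂c)
    (hq.isCompact_preimage_inter hqs hW₁s hW₁ hW₁c hW₂s hW₂ hW₂c)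

namespace AlgebraicGeometry

theorem LocallyOfFinitePresentation.of_comp {X Y Z : Scheme.{u}} {f : X ⟶ Y} {g : Y ⟶ Z}
    (hfg : LocallyOfFinitePresentation (f ≫ g)) (hg : LocallyOfFiniteType g) :
    LocallyOfFinitePresentation f := by
  -- Instance search does not find these derived instances under the default
  -- `maxSynthPendingDepth`.
  have := HasRingHomProperty.instIsZariskiLocalAtTarget @LocallyOfFinitePresentation.{u}
  have := HasRingHomProperty.instIsZariskiLocalAtSource (P := @LocallyOfFinitePresentation.{u})
  have := HasRingHomProperty.instIsZariskiLocalAtTarget @LocallyOfFiniteType.{u}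
  wlog hZ : IsAffine Z generalizing X Y Z with H
  · rw [IsZariskiLocalAtTarget.iff_of_iSup_eq_top (P := @LocallyOfFinitePresentation) _
      (g.iSup_preimage_eq_top (iSup_affineOpens_eq_top Z))]
    intro U
    have hfg' := IsZariskiLocalAtTarget.restrict hfg U.1
    rw [morphismRestrict_comp] at hfg'
    exact H hfg' (IsZariskiLocalAtTarget.restrict hg U.1) U.2
  wlog hY : IsAffine Y generalizing X Y with H
  · rw [IsZariskiLocalAtTarget.iff_of_iSup_eq_top (P := @LocallyOfFinitePresentation) _
      (iSup_affineOpens_eq_top Y)]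
    intro U
    have hfg' := HasRingHomProperty.comp_of_isOpenImmersion _ (f ⁻¹ᵁ U.1).ι (f ≫ g) hfg
    rw [← morphismRestrict_ι_assoc] at hfg'
    exact H hfg' (HasRingHomProperty.comp_of_isOpenImmersion _ U.1.ι g hg) U.2
  wlog hX : IsAffine X generalizing X with H
  · rw [IsZariskiLocalAtSource.iff_of_iSup_eq_top (P := @LocallyOfFinitePresentation) _
      (iSup_affineOpens_eq_top X)]
    intro U
    have hfg' := HasRingHomProperty.comp_of_isOpenImmersion _ U.1.ι (f ≫ g) hfg
    rw [← Category.assoc] at hfg'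
    exact H hfg' U.2
  rw [HasRingHomProperty.iff_of_isAffine (P := @LocallyOfFinitePresentation)] at hfg ⊢
  rw [HasRingHomProperty.iff_of_isAffine (P := @LocallyOfFiniteType)] at hg
  rw [Scheme.Hom.comp_appTop, CommRingCat.hom_comp] at hfg
  exact hfg.of_comp_finiteType _ hg

theorem IsAffineOpen.isCompact_diff_zeroLocus {X : Scheme.{u}} {V : X.Opens}
    (hV : IsAffineOpen V) {I : Ideal Γ(X, V)} (hI : I.FG) :
    IsCompact ((V : Set X) \ X.zeroLocus (U := V) I) := by
  obtain ⟨t, rfl⟩ := hI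
  have hdiff : (V : Set X) \ X.zeroLocus (U := V) (Ideal.span (t : Set Γ(X, V))) =
      ⋃ r ∈ t, (X.basicOpen r : Set X) := by
    ext x
    simp only [Scheme.zeroLocus_span, Set.mem_sdiff, Scheme.mem_zeroLocus_iff, Set.mem_iUnion,
      not_forall, not_not, exists_prop]
    exact ⟨fun ⟨_, r, hr, hx⟩ ↦ ⟨r, hr, hx⟩, fun ⟨r, hr, hx⟩ ↦ ⟨X.basicOpen_le r hx, r, hr, hx⟩⟩
  rw [hdiff]
  exact t.isCompact_biUnion fun r _ ↦ (hV.basicOpen r).isCompact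

theorem IsClosedImmersion.range_inter_eq_zeroLocus_ker {X Y : Scheme.{u}} (f : X ⟶ Y)
    [IsClosedImmersion f] (V : Y.affineOpens) :
    Set.range f ∩ V = Y.zeroLocus (U := V) (RingHom.ker (f.app V).hom) ∩ V := by
  rw [← f.isClosedEmbedding.isClosed_range.closure_eq, ← f.support_ker,
    Scheme.IdealSheafData.coe_support_inter, Scheme.Hom.ker_apply]

theorem IsClosedImmersion.isCompact_diff_range {X Y : Scheme.{u}} (f : X ⟶ Y)
    [IsClosedImmersion f] [LocallyOfFinitePresentation f] {V : Y.Opens} (hV : IsAffineOpen V) :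
    IsCompact ((V : Set Y) \ Set.range f) := by
  have hfp : (f.app V).hom.FinitePresentation := by
    rw [Scheme.Hom.app_eq_appLE]
    exact HasRingHomProperty.appLE @LocallyOfFinitePresentation f ‹_› ⟨V, hV⟩
      ⟨_, hV.preimage f⟩ le_rfl
  have hker := hfp.ker_fg_of_surjective (f.app_surjective V hV)
  have hdiff : (V : Set Y) \ Set.range f =
      (V : Set Y) \ Y.zeroLocus (U := V) (RingHom.ker (f.app V).hom) := by
    rw [← Set.sdiff_inter_self_eq_sdiff, IsClosedImmersion.range_inter_eq_zeroLocus_ker f ⟨V, hV⟩,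
      Set.sdiff_inter_self_eq_sdiff]
  rw [hdiff]
  exact hV.isCompact_diff_zeroLocus hker

theorem quasiCompact_of_range_eq_compl_range {X Y E : Scheme.{u}} (i : X ⟶ E) (j : Y ⟶ E)
    [IsClosedImmersion i] [LocallyOfFinitePresentation i] [IsOpenImmersion j]
    (hrange : Set.range i = (Set.range j)ᶜ) : QuasiCompact j := by
  rw [quasiCompact_iff_forall_isAffineOpen]
  intro V hV
  have hdiff : (V : Set E) \ Set.range i = (V : Set E) ∩ Set.range j := by
    rw [hrange, Set.sdiff_compl]
  have hpre : (j ⁻¹ᵁ V : Set Y) = j ⁻¹' ((V : Set E) \ Set.range i) := by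
    rw [hdiff, Set.preimage_inter, Set.preimage_range, Set.inter_univ]
    rfl
  rw [hpre, j.isOpenEmbedding.isInducing.isCompact_preimage_iff
    (hdiff ▸ Set.inter_subset_right)]
  exact IsClosedImmersion.isCompact_diff_range i hV

theorem quasiCompact_of_range_union_eq_univ {X X' E Y : Scheme.{u}} (i : X ⟶ E) (j : X' ⟶ E)
    (e : E ⟶ Y) (hcover : Set.range i ∪ Set.range j = Set.univ)
    [QuasiCompact (i ≫ e)] [QuasiCompact (j ≫ e)] : QuasiCompact e := by
  constructor
  intro U hU hUc
  exact isCompact_of_range_union_eq_univ i.continuous j.continuous hcover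
    (QuasiCompact.isCompact_preimage (f := i ≫ e) U hU hUc)
    (QuasiCompact.isCompact_preimage (f := j ≫ e) U hU hUc)

theorem quasiSeparated_of_forall_isQuasiSeparated_preimage {X Y : Scheme.{u}} (f : X ⟶ Y)
    (H : ∀ U : Y.affineOpens, IsQuasiSeparated (f ⁻¹ᵁ U.1 : Set X)) : QuasiSeparated f :=
  -- The affine-property instance is passed by hand, as instance search does not find it.
  @HasAffineProperty.of_iSup_eq_top _ _
    instHasAffinePropertyQuasiSeparatedQuasiSeparatedSpaceCarrierCarrierCommRingCat _ _ f _
    (fun U : Y.affineOpens ↦ U) (iSup_affineOpens_eq_top Y)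
    fun U ↦ (isQuasiSeparated_iff_quasiSeparatedSpace _ (f ⁻¹ᵁ U.1).isOpen).mp (H U)

theorem quasiSeparated_of_range_union_eq_univ {X X' E Y : Scheme.{u}} (i : X ⟶ E) (j : X' ⟶ E)
    (e : E ⟶ Y) (hcover : Set.range i ∪ Set.range j = Set.univ) [QuasiCompact i]
    [QuasiCompact j] [QuasiSeparated (i ≫ e)] [QuasiSeparated (j ≫ e)] : QuasiSeparated e :=
  quasiSeparated_of_forall_isQuasiSeparated_preimage e fun U ↦
    isQuasiSeparated_of_range_union_eq_univ i.isSpectralMap j.isSpectralMap hcover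
      ((i ≫ e).isQuasiSeparated_preimage U.2.isQuasiSeparated)
      ((j ≫ e).isQuasiSeparated_preimage U.2.isQuasiSeparated)

end AlgebraicGeometry

/-- If `f` is of finite presentation, then its étale envelope map is of finite
presentation. -/
theorem etaleEnvelope_finitePresentation {X Y E : Scheme.{u}} (f : X ⟶ Y)
    (e : E ⟶ Y) (i : X ⟶ E) (j : Y ⟶ E) (h : IsEtaleEnvelope f E e i j)
    (hqc : QuasiCompact f) (hqs : QuasiSeparated f)
    (hlfp : LocallyOfFinitePresentation f) :
    QuasiCompact e ∧ QuasiSeparated e ∧ LocallyOfFinitePresentation e := by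
  have := h.closedImmersion
  have := h.openImmersion
  have he : LocallyOfFinitePresentation e := h.etale.2.2
  have : LocallyOfFinitePresentation i :=
    .of_comp (h.i_comp ▸ hlfp) inferInstance
  have : QuasiCompact j := quasiCompact_of_range_eq_compl_range i j h.range_i
  have hcover : Set.range i ∪ Set.range j = Set.univ := by
    rw [h.range_i, Set.compl_union_self]
  have : QuasiCompact (i ≫ e) := h.i_comp ▸ hqc
  have : QuasiSeparated (i ≫ e) := h.i_comp ▸ hqs
  have : QuasiCompact (j ≫ e) := h.j_comp ▸ inferInstance
  have : QuasiSeparated (j ≫ e) := h.j_comp ▸ inferInstance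
  exact ⟨quasiCompact_of_range_union_eq_univ i j e hcover,
    quasiSeparated_of_range_union_eq_univ i j e hcover, he⟩
end

section
/- Let f : X ⟶ Y be a morphism of schemes with étale envelope triple (E, e, i, j). If e : E ⟶ Y is quasi-separated, then the open immersion j is quasi-compact, and consequently Set.range i.base is a constructible subset of the underlying topological space of E. -/
open AlgebraicGeometry CategoryTheory CategoryTheory.Limits

universe u

/-- A subset of a topological space is a retrocompact open if it is open and its intersection
with every quasi-compact open subset is quasi-compact. -/
def IsRetrocompactOpen {α : Type u} [TopologicalSpace α] (U : Set α) : Prop :=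
  IsOpen U ∧ ∀ V : Set α, IsOpen V → IsCompact V → IsCompact (U ∩ V)

/-- A subset of a topological space is constructible if it belongs to the Boolean algebra
generated by the retrocompact open subsets. -/
inductive IsConstructibleSet {α : Type u} [TopologicalSpace α] : Set α → Prop
  | retrocompact (U : Set α) (hU : IsRetrocompactOpen U) : IsConstructibleSet U
  | empty : IsConstructibleSet ∅
  | compl (s : Set α) : IsConstructibleSet s → IsConstructibleSet sᶜ
  | union (s t : Set α) :
      IsConstructibleSet s → IsConstructibleSet t → IsConstructibleSet (s ∪ t)

/-! A section `j` of the quasi-separated morphism `e` is quasi-compact, since `j ≫ e = 𝟙` is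
quasi-compact and quasi-compactness descends along quasi-separated morphisms. Its image is
then an open subset whose trace on every quasi-compact open `V` is the image of the
quasi-compact `j⁻¹ V`, so it is retrocompact, and the range of `i` is its complement. -/

lemma IsSpectralMap.isRetrocompact_range {α β : Type*} [TopologicalSpace α]
    [TopologicalSpace β] {f : α → β} (hf : IsSpectralMap f) : IsRetrocompact (Set.range f) := by
  intro V hVc hVo
  rw [Set.inter_comm, ← Set.image_preimage_eq_inter_range]
  exact (hf.isCompact_preimage_of_isOpen hVo hVc).image hf.continuous

lemma IsRetrocompactOpen.of_isOpen_of_isRetrocompact {α : Type u} [TopologicalSpace α]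
    {U : Set α} (hUo : IsOpen U) (hU : IsRetrocompact U) : IsRetrocompactOpen U :=
  ⟨hUo, fun _ hVo hVc ↦ hU hVc hVo⟩

namespace AlgebraicGeometry

lemma QuasiCompact.of_comp_eq_id {Y E : Scheme.{u}} (j : Y ⟶ E) (e : E ⟶ Y)
    [QuasiSeparated e] (hje : j ≫ e = 𝟙 Y) : QuasiCompact j := by
  have : QuasiCompact (j ≫ e) := by rw [hje]; infer_instance
  exact .of_comp j e

lemma Scheme.Hom.isRetrocompactOpen_range {Y E : Scheme.{u}} (j : Y ⟶ E) [IsOpenImmersion j]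
    [QuasiCompact j] : IsRetrocompactOpen (Set.range j.base) :=
  .of_isOpen_of_isRetrocompact (IsOpenImmersion.isOpen_range j)
    j.isSpectralMap.isRetrocompact_range

end AlgebraicGeometry

/-- If the étale envelope map `e` is quasi-separated, then `j` is quasi-compact and the
range of `i` is constructible. -/
theorem etaleEnvelope_quasiSeparated_consequences {X Y E : Scheme.{u}} (f : X ⟶ Y)
    (e : E ⟶ Y) (i : X ⟶ E) (j : Y ⟶ E) (h : IsEtaleEnvelope f E e i j)
    (hqs : QuasiSeparated e) :
    QuasiCompact j ∧ IsConstructibleSet (Set.range i.base) := by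
  have := h.openImmersion
  have hj : QuasiCompact j := .of_comp_eq_id j e h.j_comp
  refine ⟨hj, ?_⟩
  rw [h.range_i]
  exact .compl _ (.retrocompact _ j.isRetrocompactOpen_range)
end
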